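/- Let H be an n-dimensional Haar subspace of C(X). Let f* ∈ H, let k be a positive integer with k ≤ n, let a₁,…,a_k ∈ A, let x₁,…,x_k ∈ X be distinct points, and let λ₁,…,λ_k be positive reals with λ₁+⋯+λ_k = 1 such that: (i') Σ_{i=1}^{k} λᵢ (f_{aᵢ}(xᵢ) − f*(xᵢ)) f(xᵢ) = 0 for all f ∈ H; and (ii) |f_{aᵢ}(xᵢ) − f*(xᵢ)| = max_{a∈A} ‖f_a − f*‖ for all i with 1 ≤ i ≤ k. Then max_{a∈A} ‖f_a − f*‖ = 0. -/
import Mathlib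


/-- `H` is an `n`-dimensional Haar subspace of `C(X, ℝ)`: it has dimension `n`
and interpolation at any `n` distinct points is uniquely solvable in `H`. -/
def IsHaarSubspace {X : Type*} [TopologicalSpace X] (n : ℕ)
    (H : Submodule ℝ C(X, ℝ)) : Prop :=
  Module.finrank ℝ H = n ∧
    ∀ x : Fin n → X, Function.Injective x → ∀ r : Fin n → ℝ,
      ∃! f : H, ∀ i, (f : C(X, ℝ)) (x i) = r i

/-- The coercion `C(X, ℝ) → (X → ℝ)` as a linear map. -/
def coeLM (X : Type*) [TopologicalSpace X] : C(X, ℝ) →ₗ[ℝ] (X → ℝ) where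
  toFun f := ⇑f
  map_add' _ _ := rfl
  map_smul' _ _ := rfl

/-- An injective family of `k` points extends to an injective family of `n` points,
provided the ambient type has at least `n` elements (finrank of a Haar subspace). -/
theorem exists_extend_injective {X : Type*} [TopologicalSpace X] {n k : ℕ}
    (hk2 : k ≤ n) (H : Submodule ℝ C(X, ℝ)) (hfr : Module.finrank ℝ H = n)
    (x : Fin k → X) (hx : Function.Injective x) :
    ∃ x' : Fin n → X, Function.Injective x' ∧
      ∀ i : Fin k, x' (Fin.castLE hk2 i) = x i := by
  classical
  have hg : ∃ g : Fin (n - k) → X, Function.Injective g ∧ ∀ j, g j ∉ Set.range x := by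
    by_cases hfin : ((Set.range x)ᶜ : Set X).Finite
    · -- then X is finite
      have hXfin : Finite X := by
        have : (Set.range x ∪ (Set.range x)ᶜ).Finite := (Set.finite_range x).union hfin
        rw [Set.union_compl_self] at this
        exact Set.finite_univ_iff.mp this
      haveI : Fintype X := Fintype.ofFinite X
      -- n ≤ card X via the finrank of H
      have hn_le : n ≤ Fintype.card X := by
        have hinj : Function.Injective ((coeLM X) ∘ₗ H.subtype) := by
          intro u v huv
          exact Subtype.ext (ContinuousMap.coe_injective (by exact huv))
        have := LinearMap.finrank_le_finrank_of_injective hinj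
        rwa [hfr, Module.finrank_pi ℝ] at this
      have hcardS : n - k ≤ Fintype.card ((Set.range x)ᶜ : Set X) := by
        have h1 : Fintype.card (Set.range x) = k := by
          rw [Set.card_range_of_injective hx, Fintype.card_fin]
        have h2 : Fintype.card ((Set.range x)ᶜ : Set X)
            = Fintype.card X - Fintype.card (Set.range x) := Fintype.card_compl_set _
        omega
      have : Nonempty (Fin (n - k) ↪ ((Set.range x)ᶜ : Set X)) := by
        apply Function.Embedding.nonempty_of_card_le
        simpa using hcardS
      obtain ⟨e⟩ := this
      exact ⟨fun j => (e j : X), fun i j hij => e.injective (Subtype.ext hij),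
        fun j => (e j).2⟩
    · haveI : Infinite ((Set.range x)ᶜ : Set X) := Set.infinite_coe_iff.mpr hfin
      let e : Fin (n - k) ↪ ((Set.range x)ᶜ : Set X) :=
        (Fin.valEmbedding).trans (Infinite.natEmbedding _)
      exact ⟨fun j => (e j : X), fun i j hij => e.injective (Subtype.ext hij),
        fun j => (e j).2⟩
  obtain ⟨g, hginj, hgS⟩ := hg
  refine ⟨fun j => if h : (j : ℕ) < k then x ⟨j, h⟩ else g ⟨(j : ℕ) - k, by omega⟩, ?_, ?_⟩
  · intro i j hij
    dsimp only at hij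
    by_cases hi : (i : ℕ) < k <;> by_cases hj : (j : ℕ) < k
    · rw [dif_pos hi, dif_pos hj] at hij
      have := hx hij
      apply Fin.ext
      simpa using congrArg Fin.val this
    · rw [dif_pos hi, dif_neg hj] at hij
      exact absurd ⟨_, hij⟩ (hgS _)
    · rw [dif_neg hi, dif_pos hj] at hij
      exact absurd ⟨_, hij.symm⟩ (hgS _)
    · rw [dif_neg hi, dif_neg hj] at hij
      have := hginj hij
      have := congrArg Fin.val this
      simp only at this
      apply Fin.ext
      omega
  · intro i
    have h : ((Fin.castLE hk2 i : Fin n) : ℕ) < k := i.2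
    show dite _ _ _ = _
    rw [dif_pos h]
    exact congrArg x (Fin.ext rfl)

/-- If `f⋆ ∈ H`, `k ≤ n`, the points `x₁, …, x_k` are distinct, and positive
`λ₁, …, λ_k` with sum one satisfy conditions (i') and (ii) with respect to the
`n`-dimensional Haar subspace `H`, then `max_{a ∈ A} ‖f_a - f⋆‖ = 0`. -/
theorem haar_few_points_zero_error
    {X : Type*} [TopologicalSpace X] [CompactSpace X] [T2Space X]
    {A : Type*} [TopologicalSpace A] [CompactSpace A] [T2Space A] [Nonempty A]
    {n : ℕ} (hn : 0 < n)
    (H : Submodule ℝ C(X, ℝ)) (hHaar : IsHaarSubspace n H)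
    (F : A → C(X, ℝ)) (hF : Continuous F)
    (fs : C(X, ℝ)) (hfs : fs ∈ H)
    (k : ℕ) (hk1 : 1 ≤ k) (hk2 : k ≤ n)
    (a : Fin k → A) (x : Fin k → X) (hx : Function.Injective x)
    (lam : Fin k → ℝ) (hlam : ∀ i, 0 < lam i) (hsum : (∑ i, lam i) = 1)
    (hi' : ∀ f ∈ H, (∑ i, lam i * (F (a i) (x i) - fs (x i)) * f (x i)) = 0)
    (hii : ∀ i, |F (a i) (x i) - fs (x i)| = ⨆ b : A, ‖F b - fs‖) :
    (⨆ b : A, ‖F b - fs‖) = 0 := by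
  classical
  set M : ℝ := ⨆ b : A, ‖F b - fs‖ with hM
  set ε : Fin k → ℝ := fun i => F (a i) (x i) - fs (x i) with hε
  obtain ⟨x', hx', hxx'⟩ := exists_extend_injective hk2 H hHaar.1 x hx
  set r : Fin n → ℝ := fun j => if h : (j : ℕ) < k then ε ⟨j, h⟩ else 0 with hr
  obtain ⟨f, hf, -⟩ := hHaar.2 x' hx' r
  have hfx : ∀ i : Fin k, (f : C(X, ℝ)) (x i) = ε i := by
    intro i
    have := hf (Fin.castLE hk2 i)
    rw [hxx' i] at this
    rw [this]
    have h : ((Fin.castLE hk2 i : Fin n) : ℕ) < k := i.2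
    show dite _ _ _ = _
    rw [dif_pos h]
    exact congrArg ε (Fin.ext rfl)
  have key := hi' (f : C(X, ℝ)) f.2
  have hterm : ∀ i : Fin k, lam i * (F (a i) (x i) - fs (x i)) * (f : C(X, ℝ)) (x i)
      = lam i * (M * M) := by
    intro i
    rw [hfx i]
    have h1 : |ε i| = M := hii i
    have h2 : ε i * ε i = M * M := by rw [← abs_mul_abs_self (ε i), h1]
    show lam i * ε i * ε i = lam i * (M * M)
    rw [mul_assoc, h2]
  rw [Finset.sum_congr rfl (fun i _ => hterm i), ← Finset.sum_mul, hsum, one_mul] at key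
  exact mul_self_eq_zero.mp key
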